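/- The Malvenuto–Reutenauer coproduct Δ_MR(σ) = Σ_{i=0}^n std(σ(1)⋯σ(i)) ⊗ std(σ(i+1)⋯σ(n)) on ⊕_{n≥0} K[Σ_n] is coassociative. -/

import Mathlib

open scoped BigOperators TensorProduct

/-- Standardization of a word with distinct letters: the unique permutation
(in one-line notation) order-isomorphic to it: the entry at a position is
`1 +` the number of letters of the word smaller than the letter there. -/
def std (w : List ℕ) : List ℕ :=
  w.map (fun a => 1 + (w.filter (fun b => b < a)).length)

/-- The face map `Fᵢ` (1-indexed): delete the `i`-th entry of the one-line
notation and standardize. -/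
def faceStd (i : ℕ) (w : List ℕ) : List ℕ := std (w.eraseIdx (i - 1))

/-- The Malvenuto–Reutenauer coproduct on the span of all (one-line notations of)
permutations inside the free module on words:
`Δ_MR(σ) = Σ_{i=0}^n std(σ(1)⋯σ(i)) ⊗ std(σ(i+1)⋯σ(n))`. -/
noncomputable def deltaMR (K : Type) [Field K] :
    (List ℕ →₀ K) →ₗ[K] (List ℕ →₀ K) ⊗[K] (List ℕ →₀ K) :=
  Finsupp.lift ((List ℕ →₀ K) ⊗[K] (List ℕ →₀ K)) K (List ℕ)
    (fun w => ∑ i ∈ Finset.range (w.length + 1),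
      Finsupp.single (std (w.take i)) (1 : K) ⊗ₜ[K]
        Finsupp.single (std (w.drop i)) (1 : K))


/-! Coassociativity reduces to the fact that standardization forgets order-preserving
relabelings: `std` of a factor of `std w` equals `std` of the same factor of `w`. Then both
sides of the identity are `∑_{i ≤ j} std(w[0,i)) ⊗ std(w[i,j)) ⊗ std(w[j,n))`, summed in two
different orders. -/

def stdRank (w : List ℕ) (a : ℕ) : ℕ := 1 + (w.filter (fun b => b < a)).length

lemma std_eq_map_stdRank (w : List ℕ) : std w = w.map (stdRank w) := rfl

@[simp]
lemma length_std (w : List ℕ) : (std w).length = w.length := List.length_map _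

lemma filter_lt_filter_lt_of_le (w : List ℕ) {a b : ℕ} (hab : a ≤ b) :
    (w.filter (fun x => x < b)).filter (fun x => x < a) = w.filter (fun x => x < a) := by
  rw [List.filter_filter]
  exact List.filter_congr fun x _ => by grind

lemma stdRank_mono (w : List ℕ) {a b : ℕ} (hab : a ≤ b) : stdRank w a ≤ stdRank w b := by
  unfold stdRank
  rw [← filter_lt_filter_lt_of_le w hab]
  grind [List.length_filter_le]

lemma stdRank_lt_stdRank_iff {w : List ℕ} {a b : ℕ} (ha : a ∈ w) :
    stdRank w a < stdRank w b ↔ a < b := by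
  refine ⟨fun h => lt_of_not_ge fun hba => (stdRank_mono w hba).not_gt h, fun hab => ?_⟩
  unfold stdRank
  rw [← filter_lt_filter_lt_of_le w hab.le, Nat.add_lt_add_iff_left,
    List.length_filter_lt_length_iff_exists]
  exact ⟨a, List.mem_filter.2 ⟨ha, by simpa using hab⟩, by simp⟩

lemma std_map_of_lt_iff {w : List ℕ} {f : ℕ → ℕ}
    (hf : ∀ a ∈ w, ∀ b ∈ w, f a < f b ↔ a < b) : std (w.map f) = std w := by
  simp only [std_eq_map_stdRank, List.map_map]
  refine List.map_congr_left fun a ha => ?_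
  simp only [Function.comp_apply, stdRank, List.filter_map, List.length_map]
  congr 2
  exact List.filter_congr fun b hb => by simp [hf b hb a ha]

lemma std_map_stdRank_of_subset {u w : List ℕ} (h : u ⊆ w) :
    std (u.map (stdRank w)) = std u :=
  std_map_of_lt_iff fun _ ha _ _ => stdRank_lt_stdRank_iff (h ha)

@[simp]
lemma std_take_std (w : List ℕ) (i : ℕ) : std ((std w).take i) = std (w.take i) := by
  rw [std_eq_map_stdRank w, ← List.map_take, std_map_stdRank_of_subset (List.take_subset i w)]

@[simp]
lemma std_drop_std (w : List ℕ) (i : ℕ) : std ((std w).drop i) = std (w.drop i) := by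
  rw [std_eq_map_stdRank w, ← List.map_drop, std_map_stdRank_of_subset (List.drop_subset i w)]

lemma Finset.sum_range_succ_sum_range_succ_comm {M : Type*} [AddCommMonoid M] (n : ℕ)
    (f : ℕ → ℕ → M) :
    ∑ j ∈ range (n + 1), ∑ i ∈ range (j + 1), f i j =
      ∑ i ∈ range (n + 1), ∑ k ∈ range (n - i + 1), f i (i + k) := by
  simp only [range_eq_Ico]
  rw [← sum_Ico_Ico_comm]
  refine sum_congr rfl fun i hi => ?_
  rw [sum_Ico_eq_sum_range, Nat.sub_add_comm (Nat.le_of_lt_succ (mem_Ico.1 hi).2), range_eq_Ico]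

open Finset TensorProduct

section deltaMR

variable (K : Type) [Field K]

lemma deltaMR_single (w : List ℕ) :
    deltaMR K (Finsupp.single w 1) =
      ∑ i ∈ range (w.length + 1),
        Finsupp.single (std (w.take i)) (1 : K) ⊗ₜ Finsupp.single (std (w.drop i)) (1 : K) := by
  rw [deltaMR, Finsupp.lift_apply, Finsupp.sum_single_index] <;> simp

lemma assoc_map_deltaMR_id_deltaMR_single (w : List ℕ) :
    TensorProduct.assoc K _ _ _ (map (deltaMR K) LinearMap.id (deltaMR K (Finsupp.single w 1))) =
      ∑ j ∈ range (w.length + 1), ∑ i ∈ range (j + 1),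
        Finsupp.single (std (w.take i)) (1 : K) ⊗ₜ
          (Finsupp.single (std ((w.take j).drop i)) (1 : K) ⊗ₜ
            Finsupp.single (std (w.drop j)) (1 : K)) := by
  simp only [deltaMR_single, map_sum, map_tmul, LinearMap.id_coe, id_eq, sum_tmul,
    assoc_tmul, std_take_std, std_drop_std, length_std, List.length_take, List.take_take]
  refine sum_congr rfl fun j hj => ?_
  rw [min_eq_left (Nat.le_of_lt_succ (mem_range.1 hj))]
  refine sum_congr rfl fun i hi => ?_
  rw [min_eq_left (Nat.le_of_lt_succ (mem_range.1 hi))]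

lemma map_id_deltaMR_deltaMR_single (w : List ℕ) :
    map LinearMap.id (deltaMR K) (deltaMR K (Finsupp.single w 1)) =
      ∑ i ∈ range (w.length + 1), ∑ k ∈ range (w.length - i + 1),
        Finsupp.single (std (w.take i)) (1 : K) ⊗ₜ
          (Finsupp.single (std ((w.drop i).take k)) (1 : K) ⊗ₜ
            Finsupp.single (std (w.drop (i + k))) (1 : K)) := by
  simp only [deltaMR_single, map_sum, map_tmul, LinearMap.id_coe, id_eq, tmul_sum,
    std_take_std, std_drop_std, length_std, List.length_drop, List.drop_drop]

end deltaMR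

theorem deltaMR_coassoc_general (K : Type) [Field K] (w : List ℕ) :
    (TensorProduct.assoc K _ _ _)
        ((TensorProduct.map (deltaMR K) LinearMap.id)
          ((deltaMR K) (Finsupp.single w (1 : K))))
      = (TensorProduct.map LinearMap.id (deltaMR K))
          ((deltaMR K) (Finsupp.single w (1 : K))) := by
  rw [assoc_map_deltaMR_id_deltaMR_single, map_id_deltaMR_deltaMR_single,
    sum_range_succ_sum_range_succ_comm]
  simp only [List.drop_take, Nat.add_sub_cancel_left]

/-- the Malvenuto–Reutenauer coproduct is coassociative. -/
theorem deltaMR_coassoc (K : Type) [Field K] (n : ℕ) (w : List ℕ)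
    (hperm : w.Perm (List.range' 1 n)) :
    (TensorProduct.assoc K _ _ _)
        ((TensorProduct.map (deltaMR K) LinearMap.id)
          ((deltaMR K) (Finsupp.single w (1 : K))))
      = (TensorProduct.map LinearMap.id (deltaMR K))
          ((deltaMR K) (Finsupp.single w (1 : K))) :=
  deltaMR_coassoc_general K w
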